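/- Second-order existential quantification over a relation P can be simulated by spatial conjunction: let none_but_P(e) assert that e(Q) = ∅ for all symbols Q ≠ P. Then for any predicate F on structures and any structure e with e(P) = U^{ar(P)} (full relation at P), the following holds: (∃ r ⊆ U^{ar(P)}, F(e[P:=r])) if and only if ⟦none_but_P ⋆ F⟧e. -/

import Mathlib

variable {U : Type*} {Sig : Type*}

def Struc (U : Type*) (Sig : Type*) (ar : Sig → ℕ) : Type _ :=
  (P : Sig) → Set (Fin (ar P) → U)

def splitS {ar : Sig → ℕ} (e e1 e2 : Struc U Sig ar) : Prop :=
  ∀ P : Sig, e P = e1 P ∪ e2 P ∧ e1 P ∩ e2 P = ∅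

def star {ar : Sig → ℕ} (F1 F2 : Struc U Sig ar → Prop) (e : Struc U Sig ar) : Prop :=
  ∃ e1 e2 : Struc U Sig ar, splitS e e1 e2 ∧ F1 e1 ∧ F2 e2

def noneBut {ar : Sig → ℕ} (P : Sig) (e : Struc U Sig ar) : Prop :=
  ∀ Q : Sig, Q ≠ P → e Q = ∅


/-! Splitting off a structure that is empty outside `P` leaves `e` unchanged outside `P`, so the
remainder is `e[P := r]` for some `r`; conversely, because `e P` is full, every `r` arises this way,
with `rᶜ` as the part split off. -/

section

variable {ar : Sig → ℕ} [DecidableEq Sig]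

theorem noneBut_update_empty (P : Sig) (s : Set (Fin (ar P) → U)) :
    noneBut P (Function.update (fun _ => ∅ : Struc U Sig ar) P s) :=
  fun _ hQ => Function.update_of_ne hQ _ _

theorem splitS_update_diff {e : Struc U Sig ar} {P : Sig} {r : Set (Fin (ar P) → U)}
    (hr : r ⊆ e P) :
    splitS e (Function.update (fun _ => ∅) P (e P \ r)) (Function.update e P r) := by
  intro Q
  rcases eq_or_ne Q P with rfl | hQ
  · rw [Function.update_self, show Function.update e Q r Q = r from Function.update_self _ _ _]
    exact ⟨(Set.sdiff_union_of_subset hr).symm, Set.sdiff_inter_self⟩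
  · rw [Function.update_of_ne hQ, show Function.update e P r Q = e Q from Function.update_of_ne hQ _ _]
    simp

theorem update_eq_of_splitS_of_noneBut {e e1 e2 : Struc U Sig ar} {P : Sig}
    (hsplit : splitS e e1 e2) (hnone : noneBut P e1) :
    Function.update e P (e2 P) = e2 := by
  funext Q
  rcases eq_or_ne Q P with rfl | hQ
  · exact Function.update_self _ _ _
  · refine (Function.update_of_ne hQ _ _).trans ?_
    rw [(hsplit Q).1, hnone Q hQ, Set.empty_union]

end

theorem stmt_14_general [DecidableEq Sig] {ar : Sig → ℕ}
    (P : Sig) (F : Struc U Sig ar → Prop) (e : Struc U Sig ar)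
    (hfull : e P = Set.univ) :
    (∃ r : Set (Fin (ar P) → U), F (Function.update e P r)) ↔
      star (noneBut P) F e := by
  constructor
  · rintro ⟨r, hF⟩
    exact ⟨_, _, splitS_update_diff (hfull ▸ Set.subset_univ r), noneBut_update_empty P _, hF⟩
  · rintro ⟨e1, e2, hsplit, hnone, hF⟩
    exact ⟨e2 P, (update_eq_of_splitS_of_noneBut hsplit hnone).symm ▸ hF⟩

theorem stmt_14 [Fintype Sig] [DecidableEq Sig] {ar : Sig → ℕ}
    (P : Sig) (F : Struc U Sig ar → Prop) (e : Struc U Sig ar)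
    (hfull : e P = Set.univ) :
    (∃ r : Set (Fin (ar P) → U), F (Function.update e P r)) ↔
      star (noneBut P) F e :=
  stmt_14_general P F e hfull
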